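/- arXiv:2110.11548 — 3 statements merged into one kernel-verified Lean document; each statement's English description precedes it below -/
import Mathlib

section
/- Let Γ be a countable discrete amenable group acting on a compact Hausdorff space X and A ⊆ X a closed set. Then D̄(A) = sup_{μ ∈ M_Γ(X)} μ(A), where D̄ is the upper Banach density. -/
open MeasureTheory

open Classical in
/-- The average of `1_A` along the partial orbit `F • x`. -/
noncomputable def orbitAvg {Γ X : Type*} [Group Γ] [MulAction Γ X]
    (F : Finset Γ) (A : Set X) (x : X) : ℝ :=
  ((F.card : ℝ))⁻¹ * (F.sum fun s => if s • x ∈ A then (1 : ℝ) else 0)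

/-- The upper Banach density of `A ⊆ X` with respect to the action of `Γ`:
`D̄(A) = inf over finite nonempty F ⊆ Γ of sup_x (1/|F|) Σ_{s ∈ F} 1_A(sx)`. -/
noncomputable def upperBanachDensity (Γ : Type*) {X : Type*} [Group Γ] [MulAction Γ X]
    (A : Set X) : ℝ :=
  sInf {v : ℝ | ∃ F : Finset Γ, F.Nonempty ∧ v = ⨆ x : X, orbitAvg F A x}

/-- `μ` is a `Γ`-invariant Borel probability measure. -/
def IsInvariantProbMeasure (Γ : Type*) {X : Type*} [Group Γ] [MulAction Γ X]
    [MeasurableSpace X] (μ : Measure X) : Prop :=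
  IsProbabilityMeasure μ ∧ ∀ γ : Γ, Measure.map (fun x : X => γ • x) μ = μ

/-- A Følner sequence of finite sets in a group. -/
def IsFolnerSeqGroup {Γ : Type*} [Group Γ] [DecidableEq Γ] (F : ℕ → Finset Γ) : Prop :=
  (∀ n, (F n).Nonempty) ∧
  ∀ γ : Γ, Filter.Tendsto
    (fun n => (((symmDiff ((F n).image (fun s => γ * s)) (F n)).card : ℝ)) / ((F n).card : ℝ))
    Filter.atTop (nhds 0)


/-!
Integrating the orbit average of `1_A` against an invariant measure `μ` gives `μ(A)`, so
`μ(A) ≤ D̄(A)`. Conversely, take points `xₙ` at which the orbit average of `1_A` over the Følner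
set `Fₙ` is almost maximal, and let `Λ` be an ultralimit of the empirical means
`f ↦ |Fₙ|⁻¹ ∑_{s ∈ Fₙ} f (s • xₙ)`. The Følner property makes `Λ` invariant, so its
Riesz–Markov measure `μ` is invariant; since `A` is closed, `μ(A)` is the infimum of `Λ f` over
Urysohn functions `f ≥ 1_A`, each of which is at least `D̄(A)`.
-/

open Filter Topology Finset CompactlySupported CompactlySupportedContinuousMap

theorem Finset.abs_sum_sub_sum_le_card_symmDiff_mul {ι : Type*} [DecidableEq ι]
    (s t : Finset ι) {φ : ι → ℝ} {C : ℝ} (hφ : ∀ i, |φ i| ≤ C) :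
    |∑ i ∈ s, φ i - ∑ i ∈ t, φ i| ≤ #(symmDiff s t) * C := by
  rw [← sum_sdiff_sub_sum_sdiff]
  calc |∑ i ∈ s \ t, φ i - ∑ i ∈ t \ s, φ i|
      ≤ ∑ i ∈ s \ t, |φ i| + ∑ i ∈ t \ s, |φ i| :=
        (abs_sub _ _).trans (add_le_add (abs_sum_le_sum_abs _ _) (abs_sum_le_sum_abs _ _))
    _ = ∑ i ∈ symmDiff s t, |φ i| := (sum_union disjoint_sdiff_sdiff).symm
    _ ≤ #(symmDiff s t) * C := by simpa using sum_le_card_nsmul _ _ _ fun i _ => hφ i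

theorem PositiveLinearMap.exists_tendsto_ultrafilter {ι E : Type*} [AddCommMonoid E]
    [PartialOrder E] [Module ℝ E] (Λ : ι → E →ₚ[ℝ] ℝ) (U : Ultrafilter ι)
    (hΛ : ∀ f, ∃ C, ∀ i, |Λ i f| ≤ C) :
    ∃ Λ' : E →ₚ[ℝ] ℝ, ∀ f, Tendsto (fun i => Λ i f) U (𝓝 (Λ' f)) := by
  have hlim : ∀ f, ∃ a, Tendsto (fun i => Λ i f) U (𝓝 a) := by
    intro f
    obtain ⟨C, hC⟩ := hΛ f
    have hmem : ↑(U.map fun i => Λ i f) ≤ 𝓟 (Set.Icc (-C) C) :=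
      le_principal_iff.2 (mem_map.2 (univ_mem' fun i => abs_le.1 (hC i)))
    obtain ⟨a, -, ha⟩ := isCompact_Icc.ultrafilter_le_nhds _ hmem
    exact ⟨a, ha⟩
  choose L hL using hlim
  refine ⟨{ toFun := L, map_add' := ?_, map_smul' := ?_, monotone' := ?_ }, hL⟩
  · intro f g
    refine tendsto_nhds_unique (hL (f + g)) ?_
    simpa only [map_add] using (hL f).add (hL g)
  · intro c f
    refine tendsto_nhds_unique (hL (c • f)) ?_
    simpa only [map_smul, smul_eq_mul, RingHom.id_apply] using (hL f).const_mul c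
  · intro f g hfg
    exact le_of_tendsto_of_tendsto' (hL f) (hL g) fun i => (Λ i).monotone' hfg

namespace RealRMK

variable {X : Type*} [TopologicalSpace X] [T2Space X] [MeasurableSpace X] [BorelSpace X]

theorem isProbabilityMeasure_rieszMeasure [CompactSpace X] (Λ : C_c(X, ℝ) →ₚ[ℝ] ℝ)
    (hΛ : Λ (continuousMapEquiv 1) = 1) : IsProbabilityMeasure (rieszMeasure Λ) := by
  have h : (rieszMeasure Λ).real Set.univ = 1 := by
    simpa [hΛ] using integral_rieszMeasure Λ (continuousMapEquiv 1)
  exact ⟨(ENNReal.toReal_eq_one_iff _).1 h⟩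

theorem map_rieszMeasure_of_comp_eq [LocallyCompactSpace X] (Λ : C_c(X, ℝ) →ₚ[ℝ] ℝ)
    (e : X ≃ₜ X) (he : ∀ f, Λ (f.comp e.toCocompactMap) = Λ f) :
    Measure.map e (rieszMeasure Λ) = rieszMeasure Λ := by
  have := Measure.Regular.map (μ := rieszMeasure Λ) e
  refine Measure.ext_of_integral_eq_on_compactlySupported fun f => ?_
  rw [integral_map e.continuous.aemeasurable (map_continuous f).aestronglyMeasurable,
    integral_rieszMeasure, ← he f, ← integral_rieszMeasure]
  rfl

theorem ofReal_le_rieszMeasure_of_isCompact [LocallyCompactSpace X] (Λ : C_c(X, ℝ) →ₚ[ℝ] ℝ)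
    {K : Set X} (hK : IsCompact K) {c : ℝ}
    (hc : ∀ f : C_c(X, ℝ), (∀ x, 0 ≤ f x ∧ f x ≤ 1) → (∀ x ∈ K, f x = 1) → c ≤ Λ f) :
    ENNReal.ofReal c ≤ rieszMeasure Λ K := by
  rw [K.measure_eq_iInf_isOpen]
  refine le_iInf₂ fun V hKV => le_iInf fun hV => ?_
  obtain ⟨f, hfK, hf, hfV, hf01⟩ :=
    exists_continuousMap_one_of_isCompact_subset_isOpen hK hV hKV
  let g : C_c(X, ℝ) := ⟨f, hf⟩
  calc ENNReal.ofReal c ≤ ENNReal.ofReal (Λ g) :=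
        ENNReal.ofReal_le_ofReal (hc g hf01 fun x hx => hfK hx)
    _ ≤ rieszMeasure Λ V := le_rieszMeasure_tsupport_subset Λ (f := g) hf01 hfV

end RealRMK

section OrbitAverage

variable {Γ X : Type*} [Group Γ] [MulAction Γ X]

theorem orbitAvg_eq (F : Finset Γ) (A : Set X) (x : X) :
    orbitAvg F A x = (#F : ℝ)⁻¹ * ∑ s ∈ F, A.indicator 1 (s • x) :=
  rfl

theorem orbitAvg_nonneg (F : Finset Γ) (A : Set X) (x : X) : 0 ≤ orbitAvg F A x := by
  rw [orbitAvg_eq]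
  exact mul_nonneg (by positivity) (sum_nonneg fun s _ => Set.indicator_nonneg (by simp) _)

theorem orbitAvg_le_one (F : Finset Γ) (A : Set X) (x : X) : orbitAvg F A x ≤ 1 := by
  rw [orbitAvg_eq]
  refine inv_mul_le_one_of_le₀ ?_ (by positivity)
  simpa using sum_le_card_nsmul F (fun s => A.indicator (1 : X → ℝ) (s • x)) 1
    fun s _ => Set.indicator_le_self' (fun _ _ => zero_le_one) _

theorem bddAbove_range_orbitAvg (F : Finset Γ) (A : Set X) :
    BddAbove (Set.range (orbitAvg F A)) :=
  ⟨1, Set.forall_mem_range.2 (orbitAvg_le_one F A)⟩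

theorem iSup_orbitAvg_nonneg (F : Finset Γ) (A : Set X) : 0 ≤ ⨆ x : X, orbitAvg F A x :=
  Real.iSup_nonneg (orbitAvg_nonneg F A)

theorem upperBanachDensity_nonneg (A : Set X) : 0 ≤ upperBanachDensity Γ A :=
  Real.sInf_nonneg <| by rintro v ⟨F, -, rfl⟩; exact iSup_orbitAvg_nonneg F A

theorem upperBanachDensity_le_iSup_orbitAvg {F : Finset Γ} (hF : F.Nonempty) (A : Set X) :
    upperBanachDensity Γ A ≤ ⨆ x : X, orbitAvg F A x :=
  csInf_le ⟨0, by rintro v ⟨F, -, rfl⟩; exact iSup_orbitAvg_nonneg F A⟩ ⟨F, hF, rfl⟩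

theorem le_upperBanachDensity {A : Set X} {c : ℝ}
    (h : ∀ F : Finset Γ, F.Nonempty → c ≤ ⨆ x : X, orbitAvg F A x) :
    c ≤ upperBanachDensity Γ A :=
  le_csInf ⟨_, {1}, singleton_nonempty 1, rfl⟩ fun _ ⟨F, hF, hv⟩ => hv ▸ h F hF

theorem exists_upperBanachDensity_sub_lt_orbitAvg [Nonempty X] {F : Finset Γ} (hF : F.Nonempty)
    (A : Set X) {ε : ℝ} (hε : 0 < ε) : ∃ x, upperBanachDensity Γ A - ε < orbitAvg F A x :=
  exists_lt_of_lt_ciSup <| (sub_lt_self _ hε).trans_le <| upperBanachDensity_le_iSup_orbitAvg hF A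

theorem upperBanachDensity_of_isEmpty [IsEmpty X] (A : Set X) : upperBanachDensity Γ A = 0 :=
  le_antisymm (by simpa using upperBanachDensity_le_iSup_orbitAvg (singleton_nonempty (1 : Γ)) A)
    (upperBanachDensity_nonneg A)

variable [MeasurableSpace X] [MeasurableConstSMul Γ X]

theorem integral_orbitAvg {μ : Measure X} (hμ : IsInvariantProbMeasure Γ μ) {A : Set X}
    (hA : MeasurableSet A) {F : Finset Γ} (hF : F.Nonempty) :
    ∫ x, orbitAvg F A x ∂μ = μ.real A := by
  obtain ⟨_, hinv⟩ := hμ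
  have hint (s : Γ) : Integrable (fun x => A.indicator (1 : X → ℝ) (s • x)) μ :=
    (integrable_const 1).indicator (hA.preimage (measurable_const_smul s))
  have hs (s : Γ) : ∫ x, A.indicator (1 : X → ℝ) (s • x) ∂μ = μ.real A := by
    rw [← integral_map (measurable_const_smul s).aemeasurable
      (measurable_one.indicator hA).aestronglyMeasurable, hinv s, integral_indicator_one hA]
  simp_rw [orbitAvg_eq]
  rw [integral_const_mul, integral_finsetSum _ fun s _ => hint s, sum_congr rfl fun s _ => hs s,
    sum_const, nsmul_eq_mul, inv_mul_cancel_left₀ (by simpa using hF.ne_empty)]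

theorem measureReal_le_upperBanachDensity {μ : Measure X} (hμ : IsInvariantProbMeasure Γ μ)
    {A : Set X} (hA : MeasurableSet A) : μ.real A ≤ upperBanachDensity Γ A := by
  have := hμ.1
  refine le_upperBanachDensity fun F hF => ?_
  calc μ.real A = ∫ x, orbitAvg F A x ∂μ := (integral_orbitAvg hμ hA hF).symm
    _ ≤ ∫ _, (⨆ x, orbitAvg F A x) ∂μ :=
      integral_mono_of_nonneg (ae_of_all _ (orbitAvg_nonneg F A)) (integrable_const _)
        (ae_of_all _ fun x => le_ciSup (bddAbove_range_orbitAvg F A) x)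
    _ = ⨆ x, orbitAvg F A x := by simp

end OrbitAverage

section OrbitMean

variable {Γ X : Type*} [Group Γ] [MulAction Γ X] [TopologicalSpace X]

noncomputable def orbitMean (F : Finset Γ) (x : X) : C_c(X, ℝ) →ₚ[ℝ] ℝ where
  toFun f := (#F : ℝ)⁻¹ * ∑ s ∈ F, f (s • x)
  map_add' f g := by simp [sum_add_distrib, mul_add]
  map_smul' c f := by simp [← mul_sum, mul_left_comm]
  monotone' f g hfg := mul_le_mul_of_nonneg_left (sum_le_sum fun s _ => hfg _) (by positivity)

theorem orbitMean_apply (F : Finset Γ) (x : X) (f : C_c(X, ℝ)) :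
    orbitMean F x f = (#F : ℝ)⁻¹ * ∑ s ∈ F, f (s • x) :=
  rfl

theorem orbitMean_one [CompactSpace X] {F : Finset Γ} (hF : F.Nonempty) (x : X) :
    orbitMean F x (continuousMapEquiv 1) = 1 := by
  simp [orbitMean_apply, hF.ne_empty]

theorem abs_orbitMean_le (F : Finset Γ) (x : X) {f : C_c(X, ℝ)} {C : ℝ}
    (hf : ∀ y, |f y| ≤ C) : |orbitMean F x f| ≤ C := by
  rw [orbitMean_apply, abs_mul, abs_inv, Nat.abs_cast]
  refine inv_mul_le_of_le_mul₀ (by positivity) ((abs_nonneg _).trans (hf x)) ?_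
  calc |∑ s ∈ F, f (s • x)| ≤ ∑ s ∈ F, |f (s • x)| := abs_sum_le_sum_abs _ _
    _ ≤ #F * C := by simpa using sum_le_card_nsmul F _ C fun s _ => hf (s • x)

theorem orbitAvg_le_orbitMean (F : Finset Γ) (x : X) {A : Set X} {f : C_c(X, ℝ)}
    (hf : ∀ y, 0 ≤ f y) (hfA : ∀ y ∈ A, 1 ≤ f y) : orbitAvg F A x ≤ orbitMean F x f := by
  rw [orbitAvg_eq, orbitMean_apply]
  gcongr with s
  exact Set.indicator_apply_le' (hfA _) fun _ => hf _

theorem abs_orbitMean_comp_smul_sub_le [ContinuousConstSMul Γ X] [DecidableEq Γ]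
    (F : Finset Γ) (x : X) (γ : Γ) {f : C_c(X, ℝ)} {C : ℝ} (hf : ∀ y, |f y| ≤ C) :
    |orbitMean F x (f.comp (Homeomorph.smul γ).toCocompactMap) - orbitMean F x f|
      ≤ C * (#(symmDiff (F.image (γ * ·)) F) / #F) := by
  have hcomp : ∑ s ∈ F, f.comp (Homeomorph.smul γ).toCocompactMap (s • x)
      = ∑ t ∈ F.image (γ * ·), f (t • x) := by
    rw [sum_image fun _ _ _ _ => mul_left_cancel]
    exact sum_congr rfl fun s _ => congrArg f (mul_smul γ s x).symm
  rw [orbitMean_apply, orbitMean_apply, hcomp, ← mul_sub, abs_mul, abs_inv, Nat.abs_cast]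
  calc (#F : ℝ)⁻¹ * |∑ t ∈ F.image (γ * ·), f (t • x) - ∑ s ∈ F, f (s • x)|
      ≤ (#F : ℝ)⁻¹ * (#(symmDiff (F.image (γ * ·)) F) * C) := by
        gcongr
        exact abs_sum_sub_sum_le_card_symmDiff_mul _ _ fun t => hf (t • x)
    _ = C * (#(symmDiff (F.image (γ * ·)) F) / #F) := by ring

end OrbitMean

theorem CompactlySupportedContinuousMap.exists_forall_abs_le {X : Type*} [TopologicalSpace X]
    (f : C_c(X, ℝ)) : ∃ C, ∀ x, |f x| ≤ C := by
  simpa only [Real.norm_eq_abs] using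
    (map_continuous f).bounded_above_of_compact_support f.hasCompactSupport

section FolnerLimit

variable {Γ X : Type*} [Group Γ] [MulAction Γ X] [TopologicalSpace X]
  {F : ℕ → Finset Γ} {x : ℕ → X} {U : Ultrafilter ℕ} {Λ : C_c(X, ℝ) →ₚ[ℝ] ℝ}

theorem map_one_of_tendsto_orbitMean [CompactSpace X] (hF : ∀ n, (F n).Nonempty)
    (hΛ : ∀ f, Tendsto (fun n => orbitMean (F n) (x n) f) U (𝓝 (Λ f))) :
    Λ (continuousMapEquiv 1) = 1 :=
  tendsto_nhds_unique (hΛ _)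
    ((tendsto_congr fun n => orbitMean_one (hF n) (x n)).2 tendsto_const_nhds)

theorem map_comp_smul_of_tendsto_orbitMean [ContinuousConstSMul Γ X] [DecidableEq Γ]
    (hF : IsFolnerSeqGroup F) (hU : (U : Filter ℕ) ≤ atTop)
    (hΛ : ∀ f, Tendsto (fun n => orbitMean (F n) (x n) f) U (𝓝 (Λ f))) (γ : Γ)
    (f : C_c(X, ℝ)) : Λ (f.comp (Homeomorph.smul γ).toCocompactMap) = Λ f := by
  obtain ⟨C, hC⟩ := f.exists_forall_abs_le
  have hdiff : Tendsto (fun n => orbitMean (F n) (x n) (f.comp (Homeomorph.smul γ).toCocompactMap)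
      - orbitMean (F n) (x n) f) U (𝓝 0) := by
    refine squeeze_zero_norm (fun n => abs_orbitMean_comp_smul_sub_le (F n) (x n) γ hC) ?_
    simpa using ((hF.2 γ).const_mul C).mono_left hU
  refine tendsto_nhds_unique (hΛ _) ?_
  simpa using (hΛ f).add hdiff

theorem upperBanachDensity_le_of_tendsto_orbitMean {A : Set X}
    (hx : ∀ n : ℕ, upperBanachDensity Γ A - 1 / (n + 1) < orbitAvg (F n) A (x n))
    (hU : (U : Filter ℕ) ≤ atTop)
    (hΛ : ∀ f, Tendsto (fun n => orbitMean (F n) (x n) f) U (𝓝 (Λ f)))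
    {f : C_c(X, ℝ)} (hf : ∀ y, 0 ≤ f y) (hfA : ∀ y ∈ A, 1 ≤ f y) :
    upperBanachDensity Γ A ≤ Λ f := by
  have hlow (n : ℕ) : upperBanachDensity Γ A - 1 / (n + 1) ≤ orbitMean (F n) (x n) f :=
    (hx n).le.trans (orbitAvg_le_orbitMean _ _ hf hfA)
  refine le_of_tendsto_of_tendsto' ?_ (hΛ f) hlow
  simpa using
    (tendsto_one_div_add_atTop_nhds_zero_nat.const_sub (upperBanachDensity Γ A)).mono_left hU

end FolnerLimit

theorem exists_isInvariantProbMeasure_upperBanachDensity_le {Γ X : Type*} [Group Γ]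
    [DecidableEq Γ] [MulAction Γ X] [TopologicalSpace X] [CompactSpace X] [T2Space X]
    [MeasurableSpace X] [BorelSpace X] [ContinuousConstSMul Γ X] [Nonempty X]
    {F : ℕ → Finset Γ} (hF : IsFolnerSeqGroup F) {A : Set X} (hA : IsClosed A) :
    ∃ μ : Measure X, IsInvariantProbMeasure Γ μ ∧ upperBanachDensity Γ A ≤ μ.real A := by
  choose x hx using fun n : ℕ =>
    exists_upperBanachDensity_sub_lt_orbitAvg (hF.1 n) A Nat.one_div_pos_of_nat
  have hU : (Ultrafilter.of (atTop : Filter ℕ) : Filter ℕ) ≤ atTop := Ultrafilter.of_le _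
  obtain ⟨Λ, hΛ⟩ := PositiveLinearMap.exists_tendsto_ultrafilter
    (fun n => orbitMean (F n) (x n)) (.of atTop)
    fun f => f.exists_forall_abs_le.imp fun _ hC _ => abs_orbitMean_le _ _ hC
  have := RealRMK.isProbabilityMeasure_rieszMeasure Λ (map_one_of_tendsto_orbitMean hF.1 hΛ)
  refine ⟨RealRMK.rieszMeasure Λ, ⟨this, fun γ => RealRMK.map_rieszMeasure_of_comp_eq Λ
    (Homeomorph.smul γ) (map_comp_smul_of_tendsto_orbitMean hF hU hΛ γ)⟩, ?_⟩
  refine (ENNReal.ofReal_le_iff_le_toReal (measure_ne_top _ _)).1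
    (RealRMK.ofReal_le_rieszMeasure_of_isCompact Λ hA.isCompact fun f hf hfA => ?_)
  exact upperBanachDensity_le_of_tendsto_orbitMean hx hU hΛ (fun y => (hf y).1)
    fun y hy => (hfA y hy).ge

theorem upperBanachDensity_eq_sup_invariant_measure_of_amenable_general
    {Γ X : Type*} [Group Γ] [DecidableEq Γ]
    [TopologicalSpace X] [CompactSpace X] [T2Space X]
    [MeasurableSpace X] [BorelSpace X] [MulAction Γ X]
    (hact : ∀ γ : Γ, Continuous fun x : X => γ • x)
    (hamen : ∃ F : ℕ → Finset Γ, IsFolnerSeqGroup F)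
    (A : Set X) (hA : IsClosed A) :
    upperBanachDensity Γ A
      = sSup {t : ℝ | ∃ μ : Measure X, IsInvariantProbMeasure Γ μ ∧ t = (μ A).toReal} := by
  have : ContinuousConstSMul Γ X := ⟨hact⟩
  set S := {t : ℝ | ∃ μ : Measure X, IsInvariantProbMeasure Γ μ ∧ t = (μ A).toReal}
  have hS : ∀ t ∈ S, t ≤ upperBanachDensity Γ A := by
    rintro t ⟨μ, hμ, rfl⟩
    exact measureReal_le_upperBanachDensity hμ hA.measurableSet
  refine le_antisymm ?_ (Real.sSup_le hS (upperBanachDensity_nonneg A))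
  rcases isEmpty_or_nonempty X with _ | _
  · rw [upperBanachDensity_of_isEmpty]
    exact Real.sSup_nonneg <| by rintro t ⟨μ, -, rfl⟩; exact ENNReal.toReal_nonneg
  · obtain ⟨F, hF⟩ := hamen
    obtain ⟨μ, hμ, hμA⟩ := exists_isInvariantProbMeasure_upperBanachDensity_le hF hA
    exact hμA.trans (le_csSup ⟨_, hS⟩ ⟨μ, hμ, rfl⟩)

/-- for a continuous action of a countable discrete amenable group
on a compact Hausdorff space and a closed set `A`, the upper Banach density of
`A` equals `sup {μ(A) : μ ∈ M_Γ(X)}`. -/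
theorem upperBanachDensity_eq_sup_invariant_measure_of_amenable
    {Γ X : Type*} [Group Γ] [Countable Γ] [DecidableEq Γ]
    [TopologicalSpace X] [CompactSpace X] [T2Space X]
    [MeasurableSpace X] [BorelSpace X] [MulAction Γ X]
    (hact : ∀ γ : Γ, Continuous fun x : X => γ • x)
    (hamen : ∃ F : ℕ → Finset Γ, IsFolnerSeqGroup F)
    (A : Set X) (hA : IsClosed A) :
    upperBanachDensity Γ A
      = sSup {t : ℝ | ∃ μ : Measure X, IsInvariantProbMeasure Γ μ ∧ t = (μ A).toReal} :=
  upperBanachDensity_eq_sup_invariant_measure_of_amenable_general hact hamen A hA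
end

section
/- Let G be a groupoid and F = {π_{V_1}, …, π_{V_n}} a finite subset of the topological full group [[G]], where each V_i is a compact open bisection with s(V_i) = r(V_i) = G⁽⁰⁾. Set K = (⋃_{1≤i,j≤n} V_iV_j) ∪ (⋃_{1≤i≤n} V_i) ∪ G⁽⁰⁾. Let u be a unit, S ⊆ G_u a finite (K, ε)-Følner set (meaning |∂_K S| ≤ ε|S|, where ∂_K⁻S = {x ∈ S : ∃y ∈ K, yx ∉ S}) with r injective on S, and P = r(S). Then |⋂_{g ∈ F ∪ F²} g⁻¹(P) ∩ P| ≥ (1-ε)|P|. -/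
/-- An algebraic groupoid: a type of arrows with a (partially meaningful)
composition, inversion, source and range maps, where units are identified
with the idempotent arrows `r(x)`, `s(x)`. -/
structure Gpd (G : Type*) where
  comp : G → G → G
  inv : G → G
  src : G → G
  rng : G → G
  src_src : ∀ x, src (src x) = src x
  rng_src : ∀ x, rng (src x) = src x
  src_rng : ∀ x, src (rng x) = rng x
  rng_rng : ∀ x, rng (rng x) = rng x
  src_inv : ∀ x, src (inv x) = rng x
  rng_inv : ∀ x, rng (inv x) = src x
  inv_inv : ∀ x, inv (inv x) = x
  src_comp : ∀ x y, src x = rng y → src (comp x y) = src y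
  rng_comp : ∀ x y, src x = rng y → rng (comp x y) = rng x
  comp_assoc : ∀ x y z, src x = rng y → src y = rng z →
    comp (comp x y) z = comp x (comp y z)
  comp_inv : ∀ x, comp x (inv x) = rng x
  inv_comp : ∀ x, comp (inv x) x = src x
  id_comp : ∀ x, comp (rng x) x = x
  comp_id : ∀ x, comp x (src x) = x

namespace Gpd

variable {G : Type*} (g : Gpd G)

/-- The unit space `G⁽⁰⁾`, identified with the set of arrows fixed by the source map. -/
def unitSpace : Set G := {x | g.src x = x}

/-- The source fiber `G_u = {x : s(x) = u}`. -/
def fiber (u : G) : Set G := {x | g.src x = u}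

/-- The set product `K F = {y x : y ∈ K, x ∈ F, s(y) = r(x)}`. -/
def setComp (K F : Set G) : Set G :=
  {z | ∃ y ∈ K, ∃ x ∈ F, g.src y = g.rng x ∧ z = g.comp y x}

/-- The set inverse `K⁻¹`. -/
def setInv (K : Set G) : Set G := g.inv '' K

end Gpd

namespace Gpd

variable {G : Type*} (g : Gpd G)

/-- The preimage of a set of units `P` under the homeomorphism
`π_B = r ∘ (s|_B)⁻¹` induced by a bisection `B` with full source and range. -/
def bisPreim (B P : Set G) : Set G :=
  {v | ∃ γ ∈ B, g.src γ = v ∧ g.rng γ ∈ P}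

/-- The left `K`-boundary `∂_K S = ∂⁺_K S ∪ ∂⁻_K S`. -/
def lBoundary (K S : Set G) : Set G :=
  (g.setComp K S \ S) ∪ {x ∈ S | ∃ y ∈ K, g.src y = g.rng x ∧ g.comp y x ∉ S}

end Gpd

/-
Call `x ∈ S` a `K`-interior point if `y x ∈ S` for every composable `y ∈ K`; the other points
of `S` lie in `∂⁻_K S`, so at least `(1 - ε)|S|` points are interior. Each `V_i` and `V_i V_j`
lies in `K` and has full source, so for an interior `x` and each `g ∈ F ∪ F²` some `γ` in the
bisection of `g` has `s(γ) = r(x)`, and then `g(r(x)) = r(γ x) ∈ P`. Injectivity of `r` on `S`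
turns the interior points into at least `(1 - ε)|P|` points of the intersection. Comparing
cardinalities needs `∂_K S` finite, which holds as `K` is a finite union of bisections.
-/

open Set

namespace Gpd

variable {G : Type*} (g : Gpd G)

def lInterior (K S : Set G) : Set G :=
  {x ∈ S | ∀ y ∈ K, g.src y = g.rng x → g.comp y x ∈ S}

variable {g}

theorem lInterior_subset (K S : Set G) : g.lInterior K S ⊆ S := fun _ hx => hx.1

theorem injOn_src_unitSpace : InjOn g.src g.unitSpace := fun x hx y hy h => by
  rw [← hx, ← hy, h]

theorem injOn_src_setComp {A B : Set G} (hA : InjOn g.src A) (hB : InjOn g.src B) :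
    InjOn g.src (g.setComp A B) := by
  rintro _ ⟨a₁, ha₁, b₁, hb₁, h₁, rfl⟩ _ ⟨a₂, ha₂, b₂, hb₂, h₂, rfl⟩ h
  rw [g.src_comp _ _ h₁, g.src_comp _ _ h₂] at h
  obtain rfl := hB hb₁ hb₂ h
  rw [hA ha₁ ha₂ (h₁.trans h₂.symm)]

theorem src_image_setComp {A B : Set G} (h : g.rng '' B ⊆ g.src '' A) :
    g.src '' g.setComp A B = g.src '' B := by
  apply Subset.antisymm
  · rintro _ ⟨_, ⟨a, -, b, hb, hab, rfl⟩, rfl⟩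
    exact ⟨b, hb, (g.src_comp a b hab).symm⟩
  · rintro _ ⟨b, hb, rfl⟩
    obtain ⟨a, ha, hab⟩ := h (mem_image_of_mem _ hb)
    exact ⟨g.comp a b, ⟨a, ha, b, hb, hab, rfl⟩, g.src_comp a b hab⟩

theorem setComp_union_left (A B S : Set G) :
    g.setComp (A ∪ B) S = g.setComp A S ∪ g.setComp B S := by
  ext z
  simp only [setComp, mem_union, mem_ofPred_eq]
  constructor
  · rintro ⟨y, hy | hy, hx⟩ <;> [left; right] <;> exact ⟨y, hy, hx⟩
  · rintro (⟨y, hy, hx⟩ | ⟨y, hy, hx⟩)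
    exacts [⟨y, Or.inl hy, hx⟩, ⟨y, Or.inr hy, hx⟩]

theorem setComp_iUnion_left {ι : Sort*} (A : ι → Set G) (S : Set G) :
    g.setComp (⋃ i, A i) S = ⋃ i, g.setComp (A i) S := by
  ext z
  simp only [setComp, mem_iUnion, mem_ofPred_eq]
  constructor
  · rintro ⟨y, ⟨i, hy⟩, hx⟩
    exact ⟨i, y, hy, hx⟩
  · rintro ⟨i, y, hy, hx⟩
    exact ⟨y, ⟨i, hy⟩, hx⟩

theorem finite_setComp_of_injOn_src {B S : Set G} (hB : InjOn g.src B) (hS : S.Finite) :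
    (g.setComp B S).Finite := by
  have hfiber : ∀ v, (B ∩ g.src ⁻¹' {v}).Subsingleton := fun v y hy y' hy' =>
    hB hy.1 hy'.1 (hy.2.trans hy'.2.symm)
  refine (hS.biUnion fun x _ => ((hfiber (g.rng x)).finite.image fun y => g.comp y x)).subset ?_
  rintro _ ⟨y, hy, x, hx, hyx, rfl⟩
  exact mem_biUnion hx ⟨y, ⟨hy, hyx⟩, rfl⟩

theorem finite_lBoundary {K S : Set G} (hKS : (g.setComp K S).Finite) (hS : S.Finite) :
    (g.lBoundary K S).Finite :=
  hKS.sdiff.union (hS.subset fun _ hx => hx.1)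

theorem diff_lInterior_subset_lBoundary (K S : Set G) :
    S \ g.lInterior K S ⊆ g.lBoundary K S := by
  rintro x ⟨hxS, hx⟩
  simp only [lInterior, mem_ofPred_eq, not_and, not_forall] at hx
  obtain ⟨y, hy, hyx, hout⟩ := hx hxS
  exact Or.inr ⟨hxS, y, hy, hyx, hout⟩

theorem ncard_sub_ncard_lBoundary_le {K S : Set G} (hS : S.Finite)
    (hB : (g.lBoundary K S).Finite) :
    (S.ncard : ℝ) - (g.lBoundary K S).ncard ≤ (g.lInterior K S).ncard := by
  have hsplit := ncard_sdiff_add_ncard_of_subset (g.lInterior_subset K S) hS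
  have hdiff := ncard_le_ncard (diff_lInterior_subset_lBoundary K S) hB
  have : (S.ncard : ℝ) ≤ (g.lBoundary K S).ncard + (g.lInterior K S).ncard := by
    exact_mod_cast hsplit ▸ Nat.add_le_add_right hdiff _
  linarith

theorem rng_image_lInterior_subset_bisPreim {K S B : Set G} (hBK : B ⊆ K)
    (hB : g.src '' B = g.unitSpace) : g.rng '' g.lInterior K S ⊆ g.bisPreim B (g.rng '' S) := by
  rintro _ ⟨x, hx, rfl⟩
  obtain ⟨γ, hγ, hγx⟩ : g.rng x ∈ g.src '' B := hB ▸ g.src_rng x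
  exact ⟨γ, hγ, hγx, g.comp γ x, hx.2 γ (hBK hγ) hγx, g.rng_comp γ x hγx⟩

end Gpd

open Gpd

theorem folner_enough_general
    {G : Type*} (g : Gpd G)
    (n : ℕ) (V : Fin n → Set G)
    (hVbis : ∀ i, Set.InjOn g.src (V i) ∧ Set.InjOn g.rng (V i))
    (hVfull : ∀ i, g.src '' (V i) = g.unitSpace ∧ g.rng '' (V i) = g.unitSpace)
    (K : Set G)
    (hKdef : K = (⋃ i, ⋃ j, g.setComp (V i) (V j)) ∪ (⋃ i, V i) ∪ g.unitSpace)
    (S : Set G) (hSfin : S.Finite)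
    (hSinj : Set.InjOn g.rng S)
    (ε : ℝ)
    (hFol : ((g.lBoundary K S).ncard : ℝ) ≤ ε * (S.ncard : ℝ))
    (P : Set G) (hP : P = g.rng '' S) :
    (1 - ε) * (P.ncard : ℝ)
      ≤ ((((⋂ i, g.bisPreim (V i) P) ∩ ⋂ i, ⋂ j, g.bisPreim (g.setComp (V i) (V j)) P)
          ∩ P).ncard : ℝ) := by
  subst hP
  have hKS : (g.setComp K S).Finite := by
    simp only [hKdef, setComp_union_left, setComp_iUnion_left]
    refine ((finite_iUnion fun i => finite_iUnion fun j => ?_).union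
      (finite_iUnion fun i => ?_)).union ?_
    · exact finite_setComp_of_injOn_src (injOn_src_setComp (hVbis i).1 (hVbis j).1) hSfin
    · exact finite_setComp_of_injOn_src (hVbis i).1 hSfin
    · exact finite_setComp_of_injOn_src injOn_src_unitSpace hSfin
  have hsub : g.rng '' g.lInterior K S ⊆
      ((⋂ i, g.bisPreim (V i) (g.rng '' S)) ∩
        ⋂ i, ⋂ j, g.bisPreim (g.setComp (V i) (V j)) (g.rng '' S)) ∩ g.rng '' S := by
    refine subset_inter (subset_inter (subset_iInter fun i => ?_) (subset_iInter₂ fun i j => ?_))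
      (image_mono (lInterior_subset K S))
    · refine rng_image_lInterior_subset_bisPreim (fun γ hγ => ?_) (hVfull i).1
      rw [hKdef]; exact Or.inl (Or.inr (mem_iUnion_of_mem i hγ))
    · refine rng_image_lInterior_subset_bisPreim (fun γ hγ => ?_) ?_
      · rw [hKdef]; exact Or.inl (Or.inl (mem_iUnion_of_mem i (mem_iUnion_of_mem j hγ)))
      · rw [src_image_setComp ((hVfull j).2.trans (hVfull i).1.symm).subset, (hVfull j).1]
  calc (1 - ε) * ((g.rng '' S).ncard : ℝ)
      ≤ S.ncard - (g.lBoundary K S).ncard := by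
        rw [hSinj.ncard_image]; linarith
    _ ≤ (g.lInterior K S).ncard := ncard_sub_ncard_lBoundary_le hSfin (finite_lBoundary hKS hSfin)
    _ = (g.rng '' g.lInterior K S).ncard :=
        (congrArg Nat.cast (hSinj.mono (lInterior_subset K S)).ncard_image).symm
    _ ≤ _ := by
        exact_mod_cast ncard_le_ncard hsub ((hSfin.image _).subset inter_subset_right)

/-- if `S ⊆ G_u` is `(K, ε)`-Følner for
`K = (⋃ V_i V_j) ∪ (⋃ V_i) ∪ G⁽⁰⁾` with `r` injective on `S`, and `P = r(S)`,
then `|⋂_{g ∈ F ∪ F²} g⁻¹(P) ∩ P| ≥ (1-ε)|P|`. -/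
theorem folner_enough
    {G : Type*} [TopologicalSpace G] (g : Gpd G)
    (hUcompact : IsCompact g.unitSpace)
    (n : ℕ) (V : Fin n → Set G)
    (hVc : ∀ i, IsCompact (V i)) (hVo : ∀ i, IsOpen (V i))
    (hVbis : ∀ i, Set.InjOn g.src (V i) ∧ Set.InjOn g.rng (V i))
    (hVfull : ∀ i, g.src '' (V i) = g.unitSpace ∧ g.rng '' (V i) = g.unitSpace)
    (K : Set G)
    (hKdef : K = (⋃ i, ⋃ j, g.setComp (V i) (V j)) ∪ (⋃ i, V i) ∪ g.unitSpace)
    (u : G) (hu : u ∈ g.unitSpace)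
    (S : Set G) (hSfin : S.Finite) (hSne : S.Nonempty) (hSu : S ⊆ g.fiber u)
    (hSinj : Set.InjOn g.rng S)
    (ε : ℝ) (hε : 0 ≤ ε)
    (hFol : ((g.lBoundary K S).ncard : ℝ) ≤ ε * (S.ncard : ℝ))
    (P : Set G) (hP : P = g.rng '' S) :
    (1 - ε) * (P.ncard : ℝ)
      ≤ ((((⋂ i, g.bisPreim (V i) P) ∩ ⋂ i, ⋂ j, g.bisPreim (g.setComp (V i) (V j)) P)
          ∩ P).ncard : ℝ) :=
  folner_enough_general g n V hVbis hVfull K hKdef S hSfin hSinj ε hFol P hP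
end

section
/- Let Γ be a countable group enumerated as {e = γ₀, γ₁, γ₂, …}. Suppose there exist constants ε_i > 0 for each i ≥ 1 and, for each n ≥ 1, a finite set A_n and a map Θ_n : Γ → Map(A_n) with Θ_n(e) = id, such that for all r > 0 and ε > 0 there is K_{r,ε} with: for n > K_{r,ε}, (1) d_H(Θ_n(γ_iγ_j), Θ_n(γ_i)Θ_n(γ_j)) < ε for all 1 ≤ i, j ≤ r, and (2) d_H(Θ_n(γ_i), id) > ε_i for all 1 ≤ i ≤ r. Then Γ is sofic. -/
/-- The normalized Hamming distance on self-maps of a (finite) set. -/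
noncomputable def hamDist {A : Type*} (f h : A → A) : ℝ :=
  (({x : A | f x ≠ h x}.ncard : ℝ)) / (Nat.card A : ℝ)

/-- A group is sofic if it admits almost multiplicative, almost free maps
into the maps of finite sets with respect to the normalized Hamming distance. -/
def IsSofic (Γ : Type*) [Group Γ] : Prop :=
  ∀ (F : Finset Γ) (ε : ℝ), 0 < ε →
    ∃ (A : Type) (_ : Fintype A) (_ : Nonempty A) (Θ : Γ → A → A),
      Θ 1 = id ∧
      (∀ f ∈ F, ∀ h ∈ F, f * h ∈ F → hamDist (Θ (f * h)) (Θ f ∘ Θ h) ≤ ε) ∧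
      (∀ f ∈ F, f ≠ 1 → hamDist (Θ f) id > 1 - ε)

open Finset

lemma hamDist_self {A : Type*} (f : A → A) : hamDist f f = 0 := by
  simp [hamDist]

lemma hamDist_nonneg {A : Type*} (f h : A → A) : 0 ≤ hamDist f h := by
  unfold hamDist; positivity

lemma hamDist_eq_one_sub {A : Type*} [Fintype A] [Nonempty A] [DecidableEq A] (f h : A → A) :
    hamDist f h = 1 - ((univ.filter (fun x => f x = h x)).card : ℝ) / (Fintype.card A : ℝ) := by
  have hN : (0:ℝ) < (Fintype.card A : ℝ) := by exact_mod_cast Fintype.card_pos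
  have hset : {x : A | f x ≠ h x} = ↑(univ.filter fun x => f x ≠ h x) := by ext x; simp
  have hcard := Finset.card_filter_add_card_filter_not (s := (univ : Finset A))
      (p := fun x => f x = h x)
  simp only [card_univ] at hcard
  rw [hamDist, Nat.card_eq_fintype_card, hset, Set.ncard_coe_finset]
  have h1 : ((univ.filter fun x => f x ≠ h x).card : ℝ)
      = Fintype.card A - (univ.filter fun x => f x = h x).card := by
    have : (univ.filter fun x => f x = h x).card + (univ.filter fun x => f x ≠ h x).card
        = Fintype.card A := hcard
    push_cast [← this]; ring
  rw [h1]; field_simp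

lemma hamDist_le_one {A : Type*} [Fintype A] [Nonempty A] (f h : A → A) :
    hamDist f h ≤ 1 := by
  classical
  rw [hamDist_eq_one_sub]
  have : (0:ℝ) ≤ ((univ.filter (fun x => f x = h x)).card : ℝ) / (Fintype.card A : ℝ) := by
    positivity
  linarith

lemma hamDist_pi {B : Type*} [Fintype B] [Nonempty B] (k : ℕ) (u v : B → B) :
    hamDist (fun (x : Fin k → B) (t : Fin k) => u (x t)) (fun x t => v (x t))
      = 1 - (1 - hamDist u v) ^ k := by
  classical
  have hN : (0:ℝ) < (Fintype.card B : ℝ) := by exact_mod_cast Fintype.card_pos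
  rw [hamDist_eq_one_sub, hamDist_eq_one_sub]
  have hcongr : (univ.filter fun x : Fin k → B => (fun t => u (x t)) = fun t => v (x t))
      = Fintype.piFinset (fun _ : Fin k => univ.filter fun b => u b = v b) := by
    ext x
    simp [Fintype.mem_piFinset, funext_iff]
  rw [hcongr, Fintype.card_piFinset]
  simp only [Finset.prod_const, Finset.card_univ, Fintype.card_fin]
  rw [Fintype.card_fun, Fintype.card_fin]
  push_cast
  rw [sub_sub_cancel, div_pow]

/-- Elek's compressed sofic representation criterion: a countable
group admitting maps into finite sets that are asymptotically multiplicative and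
separate each nontrivial element from the identity by a fixed positive Hamming
distance is sofic. -/
theorem sofic_of_compressed_representation
    {Γ : Type*} [Group Γ] [Countable Γ]
    (γ : ℕ → Γ) (hγ0 : γ 0 = 1) (hγsurj : Function.Surjective γ)
    (ε : ℕ → ℝ) (hε : ∀ i : ℕ, 1 ≤ i → 0 < ε i)
    (A : ℕ → Type) (hAfin : ∀ n, Finite (A n)) (hAne : ∀ n, Nonempty (A n))
    (Θ : (n : ℕ) → Γ → A n → A n) (hΘ1 : ∀ n, Θ n 1 = id)
    (h : ∀ (r : ℕ) (δ : ℝ), 0 < δ → ∃ K : ℕ, ∀ n, n > K →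
      (∀ i j : ℕ, 1 ≤ i → i ≤ r → 1 ≤ j → j ≤ r →
        hamDist (Θ n (γ i * γ j)) (Θ n (γ i) ∘ Θ n (γ j)) < δ) ∧
      (∀ i : ℕ, 1 ≤ i → i ≤ r → hamDist (Θ n (γ i)) id > ε i)) :
    IsSofic Γ := by
  classical
  intro F ε₀ hε₀
  by_cases hF : ∀ f ∈ F, f = 1
  · refine ⟨Fin 1, inferInstance, inferInstance, fun _ => id, rfl, ?_, ?_⟩
    · intro f _ g _ _
      show hamDist (id : Fin 1 → Fin 1) (id ∘ id) ≤ ε₀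
      rw [Function.comp_id, hamDist_self]
      exact hε₀.le
    · intro f hf hne; exact absurd (hF f hf) hne
  · push_neg at hF
    obtain ⟨f₀, hf₀F, hf₀⟩ := hF
    set idx : Γ → ℕ := fun g => (hγsurj g).choose with hidxdef
    have hidx : ∀ g, γ (idx g) = g := fun g => (hγsurj g).choose_spec
    have hidx1 : ∀ g, g ≠ 1 → 1 ≤ idx g := by
      intro g hg
      by_contra hlt
      push_neg at hlt
      have h0 : idx g = 0 := by omega
      exact hg (by rw [← hidx g, h0, hγ0])
    set r := F.sup idx with hr
    have hler : ∀ g ∈ F, idx g ≤ r := fun g hg => Finset.le_sup hg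
    have hIcc : (Finset.Icc 1 r).Nonempty :=
      ⟨idx f₀, Finset.mem_Icc.2 ⟨hidx1 f₀ hf₀, hler f₀ hf₀F⟩⟩
    set c : ℝ := min ((Finset.Icc 1 r).inf' hIcc ε) (1/2) with hc
    have hc0 : 0 < c := by
      refine lt_min ?_ (by norm_num)
      rw [Finset.lt_inf'_iff]
      intro i hi
      exact hε i (Finset.mem_Icc.1 hi).1
    have hcε : ∀ i, 1 ≤ i → i ≤ r → c ≤ ε i := fun i h1 h2 =>
      le_trans (min_le_left _ _) (Finset.inf'_le _ (Finset.mem_Icc.2 ⟨h1, h2⟩))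
    have hc1 : c ≤ 1/2 := min_le_right _ _
    obtain ⟨k, hk⟩ := exists_pow_lt_of_lt_one hε₀ (by linarith : 1 - c < 1)
    set δ := ε₀ / (k+1) with hδ
    have hδ0 : 0 < δ := by positivity
    obtain ⟨K, hK⟩ := h r δ hδ0
    set n := K + 1 with hn
    obtain ⟨hmul, hfree⟩ := hK n (Nat.lt_succ_self K)
    letI : Fintype (A n) := Fintype.ofFinite _
    haveI := hAne n
    refine ⟨Fin k → A n, inferInstance, inferInstance,
      fun g x t => Θ n g (x t), ?_, ?_, ?_⟩
    · funext x
      simp [hΘ1 n]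
    · intro f hfF g hgF _
      have hbase : hamDist (Θ n (f * g)) (Θ n f ∘ Θ n g) ≤ δ := by
        by_cases hf1 : f = 1
        · subst hf1
          rw [one_mul, hΘ1 n, Function.id_comp, hamDist_self]
          exact hδ0.le
        by_cases hg1 : g = 1
        · subst hg1
          rw [mul_one, hΘ1 n, Function.comp_id, hamDist_self]
          exact hδ0.le
        · have := hmul (idx f) (idx g) (hidx1 f hf1) (hler f hfF) (hidx1 g hg1) (hler g hgF)
          rw [hidx f, hidx g] at this
          exact this.le
      have hp0 : 0 ≤ hamDist (Θ n (f * g)) (Θ n f ∘ Θ n g) := hamDist_nonneg _ _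
      set p := hamDist (Θ n (f * g)) (Θ n f ∘ Θ n g) with hpdef
      have hpi : hamDist (fun (x : Fin k → A n) (t : Fin k) => Θ n (f * g) (x t))
          (fun x t => (Θ n f ∘ Θ n g) (x t)) = 1 - (1 - p) ^ k := hamDist_pi k _ _
      show hamDist (fun (x : Fin k → A n) (t : Fin k) => Θ n (f * g) (x t))
          (fun x t => (Θ n f ∘ Θ n g) (x t)) ≤ ε₀
      rw [hpi]
      have hp1 : p ≤ 1 := hamDist_le_one _ _
      have hb := one_add_mul_le_pow (show (-2:ℝ) ≤ -p by linarith) k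
      have hb' : 1 - (k:ℝ) * p ≤ (1 - p) ^ k := by
        have : (1:ℝ) + -p = 1 - p := by ring
        rw [this] at hb
        linarith [hb]
      have hk1 : (k:ℝ) * p ≤ (k:ℝ) * δ :=
        mul_le_mul_of_nonneg_left hbase (by positivity)
      have hk2 : (k:ℝ) * δ ≤ ε₀ := by
        rw [hδ, mul_div_assoc']
        rw [div_le_iff₀ (by positivity : (0:ℝ) < (k:ℝ)+1)]
        nlinarith [hε₀.le, Nat.cast_nonneg (α := ℝ) k]
      linarith
    · intro f hfF hf1
      have hq := hfree (idx f) (hidx1 f hf1) (hler f hfF)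
      rw [hidx f] at hq
      have hcq : c ≤ hamDist (Θ n f) id :=
        le_trans (hcε _ (hidx1 f hf1) (hler f hfF)) hq.le
      have hq1 : hamDist (Θ n f) id ≤ 1 := hamDist_le_one _ _
      have hpi : hamDist (fun (x : Fin k → A n) (t : Fin k) => Θ n f (x t))
          (fun x t => id (x t)) = 1 - (1 - hamDist (Θ n f) id) ^ k := hamDist_pi k _ _
      show hamDist (fun (x : Fin k → A n) (t : Fin k) => Θ n f (x t))
          (fun x t => id (x t)) > 1 - ε₀
      rw [hpi]
      have hpow : (1 - hamDist (Θ n f) id) ^ k ≤ (1 - c) ^ k :=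
        pow_le_pow_left₀ (by linarith) (by linarith) k
      linarith
end
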